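/- Refinement of byte writes from infinite to finite memory: if σ1^inf ≳ σ1^fin, p^inf = ↑p^fin, b^inf = ↑b^fin, and write_b p^inf b^inf σ1^inf ∋ ok(σ2^inf, tt), then there exists σ2^fin such that σ2^inf ≳ σ2^fin and write_b p^fin b^fin σ1^fin ∋ ok(σ2^fin, tt). -/
import Mathlib

/-! Two-phase memory model: refinement of byte reads from infinite to finite memory. -/

/-- Pointers: an address tagged with a provenance (`Option ℕ`, `none` is the wildcard). -/
structure MPtr (Addr : Type) where
  a : Addr
  pr : Option ℕ

/-- Memory configurations. -/
structure Conf (Addr SByte : Type) where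
  mem : Addr → Option (SByte × Option ℕ)
  heap : Addr → Option (Set (MPtr Addr))
  stack : List (Set (MPtr Addr))
  used : Set (Option ℕ)

/-- Possible outcomes of a memory operation. -/
inductive ErrUbOom (A : Type) where
  | UB
  | OOM
  | FAIL
  | ok (a : A)

/-- The specification monad. -/
abbrev MemPropT (Addr SByte X : Type) : Type :=
  Conf Addr SByte → Set (ErrUbOom (Conf Addr SByte × X))

/-- `σ.mem[p] ≐ b`: address `p.a` maps to byte `b` with provenance `p.pr`. -/
def readByteAt {Addr SByte : Type} (σ : Conf Addr SByte) (p : MPtr Addr) (b : SByte) : Prop :=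
  σ.mem p.a = some (b, p.pr)

/-- A pointer is accessible in memory. -/
def accessible {Addr SByte : Type} (σ : Conf Addr SByte) (p : MPtr Addr) : Prop :=
  ∃ b, readByteAt σ p b


/-- `σ1 ≡ σ2 \\ ps`: the two memories agree on content and provenance at
all addresses except those of the pointers in `ps`. -/
def memEqExcept {Addr SByte : Type} (σ1 σ2 : Conf Addr SByte) (ps : Set (MPtr Addr)) : Prop :=
  ∀ (p' : MPtr Addr) (b : SByte),
    (∀ p ∈ ps, p'.a ≠ p.a) → (readByteAt σ1 p' b ↔ readByteAt σ2 p' b)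

/-- Specification of writing a byte: `UB` when the pointer is not accessible;
on success only the memory changes: `p` now maps to `b` and all other addresses
are untouched (and `OOM` is always allowed). -/
def writeSpec {Addr SByte : Type} (p : MPtr Addr) (b : SByte) : MemPropT Addr SByte Unit :=
  fun σ1 =>
    { beh | beh = .OOM
          ∨ (¬ accessible σ1 p ∧ beh = .UB)
          ∨ ∃ σ2 : Conf Addr SByte,
              σ2.heap = σ1.heap ∧ σ2.stack = σ1.stack ∧ σ2.used = σ1.used ∧
              accessible σ1 p ∧ readByteAt σ2 p b ∧
              memEqExcept σ1 σ2 {p} ∧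
              beh = .ok (σ2, ()) }

/-- Canonical injection of finite (64-bit) addresses into the infinite address type ℤ. -/
def liftAddr (a : UInt64) : ℤ := (a.toNat : ℤ)

/-- Lifting of pointers. -/
def liftPtr (p : MPtr UInt64) : MPtr ℤ := ⟨liftAddr p.a, p.pr⟩

/-- Pointwise lifting of a finite memory configuration to an infinite one,
given a lifting `liftB` of symbolic bytes. -/
def liftConf {SBf SBi : Type} (liftB : SBf → SBi) (σ : Conf UInt64 SBf) : Conf ℤ SBi where
  mem := fun z =>
    if 0 ≤ z ∧ z < 2 ^ 64 then
      (σ.mem (UInt64.ofNat z.toNat)).map (fun bp => (liftB bp.1, bp.2))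
    else none
  heap := fun z =>
    if 0 ≤ z ∧ z < 2 ^ 64 then
      (σ.heap (UInt64.ofNat z.toNat)).map (fun S => liftPtr '' S)
    else none
  stack := σ.stack.map (fun f => liftPtr '' f)
  used := σ.used

/-! ### Auxiliary lemmas -/

theorem myOfNat_toNat (a : UInt64) : UInt64.ofNat a.toNat = a := by
  apply UInt64.ext
  show a.toNat % UInt64.size = a.toNat
  exact Nat.mod_eq_of_lt a.toNat_lt

theorem myToNat_ofNat (z : ℤ) (h : 0 ≤ z) (h2 : z < 2 ^ 64) :
    (UInt64.ofNat z.toNat).toNat = z.toNat := by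
  show z.toNat % UInt64.size = z.toNat
  apply Nat.mod_eq_of_lt
  show z.toNat < 2 ^ 64
  omega

theorem conf_ext {Addr SByte : Type} {σ τ : Conf Addr SByte}
    (h1 : σ.mem = τ.mem) (h2 : σ.heap = τ.heap) (h3 : σ.stack = τ.stack)
    (h4 : σ.used = τ.used) : σ = τ := by
  cases σ; cases τ; simp_all

/-- From `memEqExcept` we extract pointwise equality of the memories. -/
theorem memEqExcept_eq {Addr SByte : Type} {σ1 σ2 : Conf Addr SByte} {p : MPtr Addr}
    (h : memEqExcept σ1 σ2 {p}) {z : Addr} (hz : z ≠ p.a) :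
    σ1.mem z = σ2.mem z := by
  have hne : ∀ q ∈ ({p} : Set (MPtr Addr)), (MPtr.mk z none).a ≠ q.a := by
    intro q hq; rcases hq with rfl; exact hz
  cases h1 : σ1.mem z with
  | none =>
    cases h2 : σ2.mem z with
    | none => rfl
    | some bp =>
      have := (h ⟨z, bp.2⟩ bp.1 (by intro q hq; rcases hq with rfl; exact hz)).mpr
        (by simpa [readByteAt] using h2)
      simp [readByteAt, h1] at this
  | some bp =>
    have := (h ⟨z, bp.2⟩ bp.1 (by intro q hq; rcases hq with rfl; exact hz)).mp
      (by simpa [readByteAt] using h1)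
    simp [readByteAt] at this
    rw [this]

/-- Refinement of byte writes from infinite to finite memory: if `σ1^inf ≳ σ1^fin`,
`p^inf = ↑p^fin`, `b^inf = ↑b^fin`, and `write_b p^inf b^inf σ1^inf ∋ ok (σ2^inf, tt)`,
then there exists `σ2^fin` such that `σ2^inf ≳ σ2^fin` and
`write_b p^fin b^fin σ1^fin ∋ ok (σ2^fin, tt)`. -/
theorem write_byte_spec_refinement {SBf SBi : Type}
    (liftB : SBf → SBi) (hinj : Function.Injective liftB)
    (σ1inf σ2inf : Conf ℤ SBi) (σ1fin : Conf UInt64 SBf)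
    (pinf : MPtr ℤ) (pfin : MPtr UInt64) (binf : SBi) (bfin : SBf)
    (hσ : σ1inf = liftConf liftB σ1fin)
    (hp : pinf = liftPtr pfin)
    (hb : binf = liftB bfin)
    (hwrite : ErrUbOom.ok (σ2inf, ()) ∈ writeSpec pinf binf σ1inf) :
    ∃ σ2fin : Conf UInt64 SBf,
      σ2inf = liftConf liftB σ2fin ∧
      ErrUbOom.ok (σ2fin, ()) ∈ writeSpec pfin bfin σ1fin := by
  subst hσ hp hb
  rcases hwrite with h | ⟨_, h⟩ | ⟨σ2, hheap, hstack, hused, hacc, hread, heq, hok⟩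
  · exact absurd h (by simp)
  · exact absurd h (by simp)
  have hσ2 : σ2inf = σ2 := by
    injection hok with h'; exact congrArg Prod.fst h'
  subst hσ2
  -- the lifted address and its range facts
  set A : ℤ := liftAddr pfin.a with hA
  have hrange : (0 : ℤ) ≤ A ∧ A < 2 ^ 64 := by
    constructor
    · exact Int.ofNat_nonneg _
    · have := pfin.a.toNat_lt
      simp only [hA, liftAddr]
      omega
  have hAtoNat : A.toNat = pfin.a.toNat := by simp [hA, liftAddr]
  have hAaddr : UInt64.ofNat A.toNat = pfin.a := by
    rw [hAtoNat, myOfNat_toNat]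
  -- accessibility in the finite memory
  obtain ⟨bi, hbi⟩ := hacc
  have hbi' : (σ1fin.mem pfin.a).map (fun bp => (liftB bp.1, bp.2)) = some (bi, pfin.pr) := by
    have h := hbi
    simp only [readByteAt, liftConf, liftPtr] at h
    rw [if_pos hrange, hAaddr] at h
    exact h
  obtain ⟨bp, hbp, hbp2⟩ := Option.map_eq_some_iff.mp hbi'
  have hprov : bp.2 = pfin.pr := (Prod.mk.injEq _ _ _ _ ▸ hbp2).2
  have haccfin : accessible σ1fin pfin := by
    exact ⟨bp.1, by simp [readByteAt, hbp, ← hprov]⟩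
  -- the candidate finite configuration
  refine ⟨⟨fun a => if a = pfin.a then some (bfin, pfin.pr) else σ1fin.mem a,
      σ1fin.heap, σ1fin.stack, σ1fin.used⟩, ?_, ?_⟩
  · apply conf_ext
    · funext z
      by_cases hz : z = A
      · have hL : σ2inf.mem A = some (liftB bfin, pfin.pr) := hread
        rw [hz, hL]
        simp only [liftConf]
        rw [if_pos hrange, hAaddr]
        simp
      · have hL : σ2inf.mem z = (liftConf liftB σ1fin).mem z :=
          (memEqExcept_eq heq (by simpa [liftPtr] using hz)).symm
        rw [hL]
        simp only [liftConf]
        by_cases hr : (0 : ℤ) ≤ z ∧ z < 2 ^ 64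
        · have hne : UInt64.ofNat z.toNat ≠ pfin.a := by
            intro hcon
            apply hz
            have h1 : (UInt64.ofNat z.toNat).toNat = z.toNat := myToNat_ofNat z hr.1 hr.2
            have : z.toNat = pfin.a.toNat := by rw [← h1, hcon]
            simp only [hA, liftAddr]
            omega
          rw [if_pos hr, if_pos hr]
          simp [hne]
        · rw [if_neg hr, if_neg hr]
    · rw [hheap]; rfl
    · rw [hstack]; rfl
    · rw [hused]; rfl
  · right; right
    refine ⟨⟨fun a => if a = pfin.a then some (bfin, pfin.pr) else σ1fin.mem a,
      σ1fin.heap, σ1fin.stack, σ1fin.used⟩, rfl, rfl, rfl, haccfin, ?_, ?_, rfl⟩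
    · simp [readByteAt]
    · intro p' b hne
      have : p'.a ≠ pfin.a := hne pfin (by simp)
      simp [readByteAt, this]
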